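/- There exists ε > 0 such that no 4-user BMAC P satisfies, with mutually independent uniform binary inputs X[1], X[2], X[3], X[4] and output Y, both I(X[i], X[j]; Y) < ε and I(X[i], X[j]; Y, X[k], X[l]) > 2 − ε for all choices of distinct i, j, k, l in {1,2,3,4}; in other words, no sequence of 4-user BMACs can have uniform rate regions converging to the uniform matroid U_{2,4}. -/

import Mathlib

/-!
For an output `y` let `q_y` be the posterior distribution of the input `X ∈ 𝔽₂⁴`. As the inputs
are uniform, `I(X[J]; Y)` is the average over `y` of `|J| - H(q_y|_J)`, and
`H(X[J] | Y, X[Jᶜ]) = |J| - I(X[J]; Y, X[Jᶜ])` is the average of `H(q_y) - H(q_y|_Jᶜ)`. Summing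
over the six pairs `J`, the hypotheses make the average of the resulting defect `D(q_y)` smaller
than `12 ε`.

But `D` is continuous and nonnegative on the simplex and vanishes nowhere: `D(q) = 0` would make
every two-coordinate marginal of `q` uniform and let any two coordinates determine `x` on the
support of `q`, so the support would be a binary MDS code of length `4` and dimension `2`, which
does not exist. By compactness `D ≥ δ > 0` on the simplex, and `ε = δ / 12` works.
-/

/-- Binary (base 2) Shannon entropy of a finitely supported distribution. -/
noncomputable def H2 {Ω : Type*} [Fintype Ω] (p : Ω → ℝ) : ℝ :=
  -∑ ω, p ω * Real.logb 2 (p ω)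

open scoped Classical in
/-- Marginal distribution of the push-forward of `p` under `f`. -/
noncomputable def marg {Ω A : Type*} [Fintype Ω] (p : Ω → ℝ) (f : Ω → A) (a : A) : ℝ :=
  ∑ ω, if f ω = a then p ω else 0

/-- Mutual information (in bits) between `f` and `g` under the joint distribution `p`. -/
noncomputable def mi {Ω A B : Type*} [Fintype Ω] [Fintype A] [Fintype B]
    (p : Ω → ℝ) (f : Ω → A) (g : Ω → B) : ℝ :=
  H2 (marg p f) + H2 (marg p g) - H2 (marg p fun ω => (f ω, g ω))

/-- `W` is a bona fide transition probability kernel (channel), `W x y = P(y | x)`. -/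
def IsChannel {α Y : Type*} [Fintype Y] (W : α → Y → ℝ) : Prop :=
  (∀ x y, 0 ≤ W x y) ∧ ∀ x, ∑ y, W x y = 1

/-- Joint distribution of (input, output) of an `m`-user BMAC with i.i.d. uniform binary
inputs. -/
noncomputable def inputJoint {m : ℕ} {Y : Type*} (W : (Fin m → ZMod 2) → Y → ℝ) :
    (Fin m → ZMod 2) × Y → ℝ :=
  fun q => W q.1 q.2 / 2 ^ m

/-- `I[J](P) = I(X[J]; Y, X[Jᶜ])` for the BMAC `W` with i.i.d. uniform binary inputs. -/
noncomputable def condMI {m : ℕ} {Y : Type*} [Fintype Y] (W : (Fin m → ZMod 2) → Y → ℝ)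
    (J : Finset (Fin m)) : ℝ :=
  mi (inputJoint W) (fun q => fun i : {i // i ∈ J} => q.1 i.1)
    (fun q => (q.2, fun i : {i // i ∈ Jᶜ} => q.1 i.1))

/-- `I(X[J]; Y)` for the BMAC `W` with i.i.d. uniform binary inputs. -/
noncomputable def miY {m : ℕ} {Y : Type*} [Fintype Y] (W : (Fin m → ZMod 2) → Y → ℝ)
    (J : Finset (Fin m)) : ℝ :=
  mi (inputJoint W) (fun q => fun i : {i // i ∈ J} => q.1 i.1) (fun q => q.2)

open Finset Real

section marginal

variable {Ω A B : Type*} [Fintype Ω] (p : Ω → ℝ) (f : Ω → A)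

lemma marg_apply_eq_sum_ite [DecidableEq A] (a : A) :
    marg p f a = ∑ ω, if f ω = a then p ω else 0 := by
  unfold marg
  congr!

lemma sum_marg_mul [Fintype A] (φ : A → ℝ) : ∑ a, marg p f a * φ a = ∑ ω, p ω * φ (f ω) := by
  classical
  simp only [marg, sum_mul, ite_mul, zero_mul]
  rw [sum_comm]
  simp

lemma sum_marg [Fintype A] : ∑ a, marg p f a = ∑ ω, p ω := by
  simpa using sum_marg_mul p f fun _ => 1

lemma marg_marg [Fintype A] (g : A → B) : marg (marg p f) g = marg p (g ∘ f) := by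
  classical
  funext b
  simpa [marg, mul_ite] using sum_marg_mul p f fun a => if g a = b then 1 else 0

lemma marg_apply_of_injective (hf : f.Injective) (ω : Ω) : marg p f (f ω) = p ω := by
  classical
  simp [marg, hf.eq_iff]

lemma marg_id : marg p id = p :=
  funext <| marg_apply_of_injective p id Function.injective_id

variable {p}

lemma marg_nonneg (hp : 0 ≤ p) : 0 ≤ marg p f := fun _ => by
  classical
  exact sum_nonneg fun ω _ => ite_nonneg (hp ω) le_rfl

lemma le_marg_apply (hp : 0 ≤ p) (ω : Ω) : p ω ≤ marg p f (f ω) := by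
  classical
  simpa [marg] using single_le_sum (f := fun ω' => if f ω' = f ω then p ω' else 0)
    (fun ω' _ => ite_nonneg (hp ω') le_rfl) (mem_univ ω)

lemma exists_ne_zero_of_marg_ne_zero {a : A} (h : marg p f a ≠ 0) : ∃ ω, p ω ≠ 0 ∧ f ω = a := by
  obtain ⟨ω, -, hω⟩ := exists_ne_zero_of_sum_ne_zero h
  by_cases hfa : f ω = a
  · exact ⟨ω, by simpa [hfa] using hω, hfa⟩
  · simp [hfa] at hω

@[fun_prop]
lemma continuous_marg : Continuous fun p : Ω → ℝ => marg p f := by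
  refine continuous_pi fun a => continuous_finsetSum _ fun ω _ => ?_
  split
  · exact continuous_apply ω
  · exact continuous_const

end marginal

section entropy

variable {Ω A B : Type*} [Fintype Ω]

lemma H2_eq_sum_negMulLog (p : Ω → ℝ) : H2 p = (∑ ω, negMulLog (p ω)) / log 2 := by
  simp [H2, negMulLog, logb, neg_div, sum_div, mul_div_assoc]

@[fun_prop]
lemma continuous_H2 : Continuous (H2 : (Ω → ℝ) → ℝ) := by
  simp_rw [funext H2_eq_sum_negMulLog]
  fun_prop

lemma H2_marg_of_injective [Fintype A] (p : Ω → ℝ) {f : Ω → A} (hf : f.Injective) :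
    H2 (marg p f) = H2 p := by
  unfold H2
  rw [sum_marg_mul p f fun a => logb 2 (marg p f a)]
  simp only [marg_apply_of_injective p f hf]

lemma H2_marg_comp_of_injective [Fintype A] [Fintype B] (p : Ω → ℝ) (f : Ω → A) {e : A → B}
    (he : e.Injective) :
    H2 (marg p (e ∘ f)) = H2 (marg p f) := by
  rw [← marg_marg, H2_marg_of_injective _ he]

lemma H2_const_inv_card [Fintype B] [Nonempty B] :
    H2 (fun _ : B => (Fintype.card B : ℝ)⁻¹) = logb 2 (Fintype.card B) := by
  have hB : (Fintype.card B : ℝ) ≠ 0 := by positivity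
  simp [H2, logb_inv, hB]

lemma negMulLog_inv (x : ℝ) : negMulLog x⁻¹ = x⁻¹ * log x := by
  simp [negMulLog, log_inv]

section probability

variable [Fintype B] {r : B → ℝ}

lemma card_pos_of_sum_eq_one (hr1 : ∑ b, r b = 1) : 0 < (Fintype.card B : ℝ) := by
  have : (univ : Finset B).Nonempty := nonempty_of_sum_ne_zero (by rw [hr1]; exact one_ne_zero)
  exact_mod_cast Fintype.card_pos_iff.2 this.to_type

lemma sum_negMulLog_le_log_card (hr0 : 0 ≤ r) (hr1 : ∑ b, r b = 1) :
    ∑ b, negMulLog (r b) ≤ log (Fintype.card B) := by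
  have hB := card_pos_of_sum_eq_one hr1
  have hJensen := strictConcaveOn_negMulLog.concaveOn.le_map_sum (t := univ)
    (w := fun _ => (Fintype.card B : ℝ)⁻¹) (fun _ _ => by positivity) (by simp [hB.ne'])
    (fun b _ => hr0 b)
  simp only [smul_eq_mul, ← mul_sum, hr1, mul_one, negMulLog_inv] at hJensen
  exact le_of_mul_le_mul_left hJensen (by positivity)

lemma H2_le_logb_card (hr0 : 0 ≤ r) (hr1 : ∑ b, r b = 1) : H2 r ≤ logb 2 (Fintype.card B) := by
  rw [H2_eq_sum_negMulLog, logb]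
  exact div_le_div_of_nonneg_right (sum_negMulLog_le_log_card hr0 hr1) (log_nonneg one_le_two)

lemma eq_inv_card_of_H2_eq_logb_card (hr0 : 0 ≤ r) (hr1 : ∑ b, r b = 1)
    (h : H2 r = logb 2 (Fintype.card B)) (b : B) : r b = (Fintype.card B : ℝ)⁻¹ := by
  have hB := card_pos_of_sum_eq_one hr1
  have hsum : ∑ b, negMulLog (r b) = log (Fintype.card B) := by
    rw [H2_eq_sum_negMulLog, logb] at h
    exact (div_left_inj' (log_pos one_lt_two).ne').1 h
  have hconst := strictConcaveOn_negMulLog.eq_of_map_sum_eq (t := univ)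
    (w := fun _ => (Fintype.card B : ℝ)⁻¹) (p := r) (fun _ _ => by positivity) (by simp [hB.ne'])
    (fun b _ => hr0 b)
    (by simp only [smul_eq_mul, ← mul_sum, hr1, hsum, mul_one, negMulLog_inv]; rfl)
  have : ∑ b', r b' = Fintype.card B * r b := by
    simp [fun b' => hconst (mem_univ b') (mem_univ b)]
  exact eq_inv_of_mul_eq_one_left (by rw [mul_comm, ← this, hr1])

end probability

variable {p : Ω → ℝ} (f : Ω → A)

lemma mul_logb_le_mul_logb_marg (hp : 0 ≤ p) (ω : Ω) :
    p ω * logb 2 (p ω) ≤ p ω * logb 2 (marg p f (f ω)) := by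
  rcases (hp ω).eq_or_lt with h0 | hpos
  · simp [← h0]
  · exact mul_le_mul_of_nonneg_left
      (logb_le_logb_of_le one_lt_two hpos (le_marg_apply f hp ω)) hpos.le

variable [Fintype A]

lemma H2_sub_H2_marg :
    H2 p - H2 (marg p f) = ∑ ω, (p ω * logb 2 (marg p f (f ω)) - p ω * logb 2 (p ω)) := by
  rw [H2, H2, sum_marg_mul p f fun a => logb 2 (marg p f a), sum_sub_distrib]
  ring

lemma H2_marg_le (hp : 0 ≤ p) : H2 (marg p f) ≤ H2 p := by
  have := sum_nonneg fun ω (_ : ω ∈ univ) => sub_nonneg.2 (mul_logb_le_mul_logb_marg f hp ω)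
  rw [← H2_sub_H2_marg] at this
  linarith

lemma injOn_support_of_H2_marg_eq (hp : 0 ≤ p) (h : H2 (marg p f) = H2 p) :
    Set.InjOn f (Function.support p) := by
  classical
  intro ω hω ω' hω' hff
  by_contra hne
  have hpos : 0 < p ω := (hp ω).lt_of_ne' hω
  have hlt : p ω < marg p f (f ω) := calc
    p ω < p ω + p ω' := lt_add_of_pos_right _ ((hp ω').lt_of_ne' hω')
    _ = ∑ x ∈ {ω, ω'}, if f x = f ω then p x else 0 := by simp [sum_pair hne, hff]
    _ ≤ marg p f (f ω) := sum_le_sum_of_subset_of_nonneg (subset_univ _)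
          fun x _ _ => ite_nonneg (hp x) le_rfl
  have : 0 < H2 p - H2 (marg p f) := by
    rw [H2_sub_H2_marg]
    refine sum_pos' (fun x _ => sub_nonneg.2 (mul_logb_le_mul_logb_marg f hp x))
      ⟨ω, mem_univ ω, sub_pos.2 ?_⟩
    exact mul_lt_mul_of_pos_left (logb_lt_logb one_lt_two hpos hlt) hpos
  linarith

end entropy

section conditional

variable {A B Y : Type*} [Fintype A] [Fintype Y]

/-- `P(X = a | Y = y)`; identically `0` when `P(Y = y) = 0`. -/
noncomputable def condDist (p : A × Y → ℝ) (y : Y) (a : A) : ℝ :=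
  p (a, y) / marg p Prod.snd y

variable {p : A × Y → ℝ}

lemma marg_snd_apply (p : A × Y → ℝ) (y : Y) : marg p Prod.snd y = ∑ a, p (a, y) := by
  classical
  simp [marg, Fintype.sum_prod_type]

lemma marg_snd_mul_condDist (hp : 0 ≤ p) (y : Y) (a : A) :
    marg p Prod.snd y * condDist p y a = p (a, y) := by
  by_cases hy : marg p Prod.snd y = 0
  · have hpa : p (a, y) = 0 := (sum_eq_zero_iff_of_nonneg fun a _ => hp (a, y)).1
      (marg_snd_apply p y ▸ hy) a (mem_univ a)
    simp [hy, hpa]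
  · exact mul_div_cancel₀ _ hy

lemma sum_condDist {y : Y} (hy : marg p Prod.snd y ≠ 0) : ∑ a, condDist p y a = 1 := by
  simp only [condDist, ← sum_div, ← marg_snd_apply, div_self hy]

lemma condDist_mem_stdSimplex (hp : 0 ≤ p) {y : Y} (hy : marg p Prod.snd y ≠ 0) :
    condDist p y ∈ stdSimplex ℝ A :=
  ⟨fun _ => div_nonneg (hp _) (marg_nonneg _ hp _), sum_condDist hy⟩

lemma marg_prodMap_apply (hp : 0 ≤ p) (f : A → B) (b : B) (y : Y) :
    marg p (fun ω => (f ω.1, ω.2)) (b, y) = marg p Prod.snd y * marg (condDist p y) f b := by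
  classical
  change _ = marg p Prod.snd y * ∑ a, if f a = b then condDist p y a else 0
  simp only [mul_sum, mul_ite, mul_zero, marg_snd_mul_condDist hp]
  simp [marg, Fintype.sum_prod_type, ite_and]

lemma H2_marg_prodMap [Fintype B] (hp : 0 ≤ p) (f : A → B) :
    H2 (marg p (fun ω => (f ω.1, ω.2))) =
      H2 (marg p Prod.snd) + ∑ y, marg p Prod.snd y * H2 (marg (condDist p y) f) := by
  have hweight : ∀ y, (∑ b, marg (condDist p y) f b) * negMulLog (marg p Prod.snd y) =
      negMulLog (marg p Prod.snd y) := by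
    intro y
    by_cases hy : marg p Prod.snd y = 0
    · simp [hy]
    · rw [sum_marg, sum_condDist hy, one_mul]
  simp only [H2_eq_sum_negMulLog, Fintype.sum_prod_type_right, marg_prodMap_apply hp,
    negMulLog_mul, sum_add_distrib, ← sum_mul, ← mul_sum, hweight]
  rw [add_div, sum_div, sum_div]
  simp only [mul_div_assoc]

lemma H2_eq_H2_marg_snd_add (hp : 0 ≤ p) :
    H2 p = H2 (marg p Prod.snd) + ∑ y, marg p Prod.snd y * H2 (condDist p y) := by
  have hinj : Function.Injective fun ω : A × Y => (id ω.1, ω.2) := fun _ _ h => h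
  simpa only [marg_id, H2_marg_of_injective p hinj] using H2_marg_prodMap hp id

lemma le_sum_marg_snd_mul (hp : 0 ≤ p) (hp1 : ∑ ω, p ω = 1) {F : (A → ℝ) → ℝ} {δ : ℝ}
    (hF : ∀ q ∈ stdSimplex ℝ A, δ ≤ F q) :
    δ ≤ ∑ y, marg p Prod.snd y * F (condDist p y) := calc
  δ = ∑ y, marg p Prod.snd y * δ := by rw [← sum_mul, sum_marg, hp1, one_mul]
  _ ≤ _ := sum_le_sum fun y _ => by
    by_cases hy : marg p Prod.snd y = 0
    · simp [hy]
    · exact mul_le_mul_of_nonneg_left (hF _ (condDist_mem_stdSimplex hp hy))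
        (marg_nonneg _ hp y)

end conditional

section bmac

variable {m : ℕ} {Y : Type*} [Fintype Y] {W : (Fin m → ZMod 2) → Y → ℝ}

lemma logb_two_card_fun_zmod_two (ι : Type*) [Fintype ι] [DecidableEq ι] :
    logb 2 (Fintype.card (ι → ZMod 2)) = Fintype.card ι := by
  simp [logb_pow]

lemma inputJoint_nonneg (hW : IsChannel W) : 0 ≤ inputJoint W := fun _ =>
  div_nonneg (hW.1 _ _) (by positivity)

lemma sum_inputJoint (hW : IsChannel W) : ∑ q, inputJoint W q = 1 := by
  simp [inputJoint, Fintype.sum_prod_type, ← sum_div, hW.2]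

lemma marg_fst_inputJoint (hW : IsChannel W) :
    marg (inputJoint W) Prod.fst = fun _ => (2 ^ m)⁻¹ := by
  funext x
  simp [marg, inputJoint, Fintype.sum_prod_type, ← sum_div, hW.2]

lemma marg_inputJoint_restrict (hW : IsChannel W) (J : Finset (Fin m)) (a : J → ZMod 2) :
    marg (inputJoint W) (fun q => J.restrict q.1) a = (Fintype.card (J → ZMod 2) : ℝ)⁻¹ := by
  let e := Equiv.piEquivPiSubtypeProd (· ∈ J) fun _ : Fin m => ZMod 2
  have hcard : (2 : ℝ) ^ m = 2 ^ Fintype.card J * 2 ^ Fintype.card {i // i ∉ J} := by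
    have := Fintype.card_congr e
    simp only [Fintype.card_prod, Fintype.card_fun, ZMod.card, Fintype.card_fin] at this
    exact_mod_cast this
  have hres : ∀ uv, J.restrict (e.symm uv) = uv.1 := fun uv =>
    congrArg Prod.fst (e.apply_symm_apply uv)
  rw [← Function.comp_def J.restrict Prod.fst, ← marg_marg, marg_fst_inputJoint hW,
    marg_apply_eq_sum_ite, ← e.symm.sum_comp]
  simp only [hres, Fintype.sum_prod_type]
  rw [sum_comm]
  simp [hcard]

lemma H2_inputJoint_restrict (hW : IsChannel W) (J : Finset (Fin m)) :
    H2 (marg (inputJoint W) (fun q => J.restrict q.1)) = J.card := by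
  rw [funext (marg_inputJoint_restrict hW J), H2_const_inv_card, logb_two_card_fun_zmod_two,
    Fintype.card_coe]

lemma miY_eq_sum (hW : IsChannel W) (J : Finset (Fin m)) :
    miY W J = ∑ y, marg (inputJoint W) Prod.snd y *
      (J.card - H2 (marg (condDist (inputJoint W) y) J.restrict)) := by
  change H2 (marg (inputJoint W) fun q => J.restrict q.1) + H2 (marg (inputJoint W) Prod.snd)
    - H2 (marg (inputJoint W) fun q => (J.restrict q.1, q.2)) = _
  rw [H2_inputJoint_restrict hW, H2_marg_prodMap (inputJoint_nonneg hW)]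
  simp only [mul_sub, sum_sub_distrib, ← sum_mul, sum_marg, sum_inputJoint hW]
  ring

lemma card_sub_condMI_eq_sum (hW : IsChannel W) (J : Finset (Fin m)) :
    J.card - condMI W J = ∑ y, marg (inputJoint W) Prod.snd y *
      (H2 (condDist (inputJoint W) y) - H2 (marg (condDist (inputJoint W) y) Jᶜ.restrict)) := by
  have hp := inputJoint_nonneg hW
  have hinj : Function.Injective fun q : (Fin m → ZMod 2) × Y =>
      (J.restrict q.1, q.2, Jᶜ.restrict q.1) := by
    intro q q' h
    simp only [Prod.mk.injEq] at h
    refine Prod.ext (funext fun i => ?_) h.2.1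
    by_cases hi : i ∈ J
    · exact congrFun h.1 ⟨i, hi⟩
    · exact congrFun h.2.2 ⟨i, mem_compl.2 hi⟩
  change (J.card : ℝ) - (H2 (marg (inputJoint W) fun q => J.restrict q.1)
    + H2 (marg (inputJoint W) (Prod.swap ∘ fun q => (Jᶜ.restrict q.1, q.2)))
    - H2 (marg (inputJoint W) fun q => (J.restrict q.1, q.2, Jᶜ.restrict q.1))) = _
  rw [H2_inputJoint_restrict hW, H2_marg_comp_of_injective _ _ Prod.swap_injective,
    H2_marg_of_injective _ hinj, H2_marg_prodMap hp, H2_eq_H2_marg_snd_add hp]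
  simp only [mul_sub, sum_sub_distrib]
  ring

end bmac

section defect

variable {m : ℕ}

/-- The contribution of a posterior `q` of the input to `I(X[J]; Y) + H(X[J] | Y, X[Jᶜ])`. -/
noncomputable def defect (J : Finset (Fin m)) (q : (Fin m → ZMod 2) → ℝ) : ℝ :=
  (J.card - H2 (marg q J.restrict)) + (H2 q - H2 (marg q Jᶜ.restrict))

lemma sum_marg_snd_mul_defect {Y : Type*} [Fintype Y] {W : (Fin m → ZMod 2) → Y → ℝ}
    (hW : IsChannel W) (J : Finset (Fin m)) :
    ∑ y, marg (inputJoint W) Prod.snd y * defect J (condDist (inputJoint W) y) =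
      miY W J + (J.card - condMI W J) := by
  rw [miY_eq_sum hW, card_sub_condMI_eq_sum hW, ← sum_add_distrib]
  simp only [defect, mul_add]

lemma continuous_defect (J : Finset (Fin m)) : Continuous (defect J) := by
  unfold defect
  fun_prop

variable {q : (Fin m → ZMod 2) → ℝ}

lemma H2_marg_restrict_le_card (hq : q ∈ stdSimplex ℝ (Fin m → ZMod 2)) (J : Finset (Fin m)) :
    H2 (marg q J.restrict) ≤ J.card := by
  have := H2_le_logb_card (marg_nonneg J.restrict hq.1) ((sum_marg q J.restrict).trans hq.2)
  rwa [logb_two_card_fun_zmod_two, Fintype.card_coe] at this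

lemma defect_nonneg (hq : q ∈ stdSimplex ℝ (Fin m → ZMod 2)) (J : Finset (Fin m)) :
    0 ≤ defect J q :=
  add_nonneg (sub_nonneg.2 (H2_marg_restrict_le_card hq J))
    (sub_nonneg.2 (H2_marg_le Jᶜ.restrict hq.1))

lemma marg_restrict_eq_and_injOn_of_defect_eq_zero (hq : q ∈ stdSimplex ℝ (Fin m → ZMod 2))
    {J : Finset (Fin m)} (h : defect J q = 0) :
    (∀ a, marg q J.restrict a = (Fintype.card (J → ZMod 2) : ℝ)⁻¹) ∧
      Set.InjOn Jᶜ.restrict (Function.support q) := by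
  obtain ⟨hJ, hJc⟩ := (add_eq_zero_iff_of_nonneg (sub_nonneg.2 (H2_marg_restrict_le_card hq J))
    (sub_nonneg.2 (H2_marg_le Jᶜ.restrict hq.1))).1 h
  refine ⟨eq_inv_card_of_H2_eq_logb_card (marg_nonneg J.restrict hq.1)
    ((sum_marg q J.restrict).trans hq.2) ?_,
    injOn_support_of_H2_marg_eq Jᶜ.restrict hq.1 (sub_eq_zero.1 hJc).symm⟩
  rw [logb_two_card_fun_zmod_two, Fintype.card_coe]
  linarith

end defect

section four_users

/-- A binary `[4, 2]` MDS code would be a pair of orthogonal Latin squares of order `2`. -/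
lemma not_forall_exists_of_pairwise_determined (S : Set (Fin 4 → ZMod 2))
    (hS : ∀ i j, i ≠ j → ∀ x ∈ S, ∀ y ∈ S, x i = y i → x j = y j → x = y) :
    ¬ ∀ a b : ZMod 2, ∃ x ∈ S, x 0 = a ∧ x 1 = b := by
  intro hsurj
  obtain ⟨x, hx, hx0, hx1⟩ := hsurj 0 0
  obtain ⟨y, hy, hy0, hy1⟩ := hsurj 0 1
  obtain ⟨z, hz, hz0, hz1⟩ := hsurj 1 1
  have hcoord : ∀ k : Fin 4, k ≠ 0 → k ≠ 1 → x k = z k := by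
    intro k hk0 hk1
    have hxy : x k ≠ y k := by
      intro h
      rw [hS 0 k hk0.symm x hx y hy (by rw [hx0, hy0]) h, hy1] at hx1
      exact absurd hx1 (by decide)
    have hzy : z k ≠ y k := by
      intro h
      rw [hS 1 k hk1.symm z hz y hy (by rw [hz1, hy1]) h, hy0] at hz0
      exact absurd hz0 (by decide)
    have : ∀ s t u : ZMod 2, s ≠ u → t ≠ u → s = t := by decide
    exact this _ _ _ hxy hzy
  have hxz : x = z := hS 2 3 (by decide) x hx z hz
    (hcoord 2 (by decide) (by decide)) (hcoord 3 (by decide) (by decide))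
  rw [hxz, hz0] at hx0
  exact absurd hx0 (by decide)

noncomputable def totalDefect (q : (Fin 4 → ZMod 2) → ℝ) : ℝ :=
  ∑ J ∈ powersetCard 2 univ, defect J q

lemma totalDefect_pos {q : (Fin 4 → ZMod 2) → ℝ} (hq : q ∈ stdSimplex ℝ (Fin 4 → ZMod 2)) :
    0 < totalDefect q := by
  have hnn : ∀ J ∈ powersetCard 2 univ, 0 ≤ defect J q := fun J _ => defect_nonneg hq J
  refine (sum_nonneg hnn).lt_of_ne fun h => ?_
  have hzero := fun J hJ => marg_restrict_eq_and_injOn_of_defect_eq_zero hq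
    ((sum_eq_zero_iff_of_nonneg hnn).1 h.symm J hJ)
  refine not_forall_exists_of_pairwise_determined (Function.support q)
    (fun i j hij x hx y hy hi hj => ?_) fun a b => ?_
  · have hK : ({i, j}ᶜ : Finset (Fin 4)) ∈ powersetCard 2 univ :=
      mem_powersetCard.2 ⟨subset_univ _, by rw [card_compl, card_pair hij]; rfl⟩
    refine (hzero _ hK).2 hx hy (funext fun ⟨k, hk⟩ => ?_)
    rw [compl_compl, mem_insert, mem_singleton] at hk
    rcases hk with rfl | rfl <;> assumption
  · let g : ({0, 1} : Finset (Fin 4)) → ZMod 2 := fun k => if k.1 = 0 then a else b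
    have hg : marg q ({0, 1} : Finset (Fin 4)).restrict g ≠ 0 := by
      rw [(hzero {0, 1} (by decide)).1 g]
      positivity
    obtain ⟨x, hx, hxg⟩ := exists_ne_zero_of_marg_ne_zero _ hg
    exact ⟨x, hx, congrFun hxg ⟨0, by decide⟩, congrFun hxg ⟨1, by decide⟩⟩

lemma exists_pos_le_totalDefect :
    ∃ δ > 0, ∀ q ∈ stdSimplex ℝ (Fin 4 → ZMod 2), δ ≤ totalDefect q := by
  have hcont : Continuous totalDefect := continuous_finsetSum _ fun J _ => continuous_defect J
  obtain ⟨q₀, hq₀, hmin⟩ := (isCompact_stdSimplex ℝ (Fin 4 → ZMod 2)).exists_isMinOn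
    ⟨_, single_mem_stdSimplex ℝ 0⟩ hcont.continuousOn
  exact ⟨totalDefect q₀, totalDefect_pos hq₀, fun q hq => hmin hq⟩

lemma sum_marg_snd_mul_totalDefect {Y : Type*} [Fintype Y] {W : (Fin 4 → ZMod 2) → Y → ℝ}
    (hW : IsChannel W) :
    ∑ y, marg (inputJoint W) Prod.snd y * totalDefect (condDist (inputJoint W) y) =
      ∑ J ∈ powersetCard 2 univ, (miY W J + (J.card - condMI W J)) := by
  simp only [totalDefect, mul_sum]
  rw [sum_comm]
  exact sum_congr rfl fun J _ => sum_marg_snd_mul_defect hW J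

lemma forall_mem_powersetCard_two_of_forall_distinct {P : Finset (Fin 4) → Prop}
    (h : ∀ i j k l : Fin 4, i ≠ j → i ≠ k → i ≠ l → j ≠ k → j ≠ l → k ≠ l → P {i, j}) :
    ∀ J ∈ powersetCard 2 univ, P J := by
  have : ∀ J ∈ powersetCard 2 (univ : Finset (Fin 4)), ∃ i j k l : Fin 4,
      i ≠ j ∧ i ≠ k ∧ i ≠ l ∧ j ≠ k ∧ j ≠ l ∧ k ≠ l ∧ J = {i, j} := by
    decide
  intro J hJ
  obtain ⟨i, j, k, l, hij, hik, hil, hjk, hjl, hkl, rfl⟩ := this J hJ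
  exact h i j k l hij hik hil hjk hjl hkl

end four_users

theorem statement18 :
    ∃ ε : ℝ, 0 < ε ∧
      ∀ (Y : Type) [Fintype Y] (W : (Fin 4 → ZMod 2) → Y → ℝ), IsChannel W →
        ¬ (∀ i j k l : Fin 4, i ≠ j → i ≠ k → i ≠ l → j ≠ k → j ≠ l → k ≠ l →
            miY W {i, j} < ε ∧ 2 - ε < condMI W {i, j}) := by
  obtain ⟨δ, hδ, hδle⟩ := exists_pos_le_totalDefect
  refine ⟨δ / 12, by positivity, fun Y _ W hW hall => ?_⟩
  have hpairs := forall_mem_powersetCard_two_of_forall_distinct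
    (P := fun J => miY W J < δ / 12 ∧ 2 - δ / 12 < condMI W J) hall
  have hlower := le_sum_marg_snd_mul (inputJoint_nonneg hW) (sum_inputJoint hW) hδle
  have hupper : ∑ J ∈ powersetCard 2 univ, (miY W J + (J.card - condMI W J)) <
      ∑ J ∈ powersetCard 2 (univ : Finset (Fin 4)), δ / 6 :=
    sum_lt_sum_of_nonempty ⟨{0, 1}, by decide⟩ fun J hJ => by
      have := hpairs J hJ
      rw [(mem_powersetCard.1 hJ).2]
      push_cast
      linarith
  rw [← sum_marg_snd_mul_totalDefect hW, sum_const, card_powersetCard, card_univ,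
    Fintype.card_fin] at hupper
  norm_num [Nat.choose] at hupper
  linarith
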